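/- arXiv:1210.1765 — 6 statements merged into one kernel-verified Lean document; each statement's English description precedes it below -/
import Mathlib

section
/- Let S[1..n] be a string, let 0 < τ ≤ 1, and let 1 ≤ i ≤ k ≤ j ≤ n with a = S[k]. Suppose k is the leftmost occurrence of a in S[i..j], i.e. there is no position p with i ≤ p < k and S[p] = a. Let r = occ(a, S[1..k]). Then a is a τ-majority of S[i..j] if and only if occ(a, S[1..j]) ≥ r + ⌈τ·(j−i+1)⌉ − 1; equivalently, a is a τ-minority of S[i..j] if and only if the (r + ⌈τ·(j−i+1)⌉ − 1)-th occurrence of a in S either does not exist or lies strictly after position j. -/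
/-!
Since `k` is the only occurrence of `a` in `S[i..k]`, splitting `S[1..j]` after `k` gives
`occ(a, S[1..j]) + 1 = occ(a, S[1..k]) + occ(a, S[i..j])`, and, the count being an integer,
`occ(a, S[i..j]) ≥ x` means `occ(a, S[i..j]) ≥ ⌈x⌉`: this is the majority test. For the minority test,
the prefix counts `p ↦ occ(a, S[1..p])` increase by one exactly at the occurrences of `a`, so a
count `t > occ(a, S[1..j])` is attained within `S[1..n]` if and only if the `t`-th occurrence of
`a` exists, lies after `j`, and is at most `n`.
-/

/-- `occ S a i j` is the number of positions `k` with `i ≤ k ≤ j` and `S k = a`. -/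
def occ {α : Type*} [DecidableEq α] (S : ℕ → α) (a : α) (i j : ℕ) : ℕ :=
  ((Finset.Icc i j).filter (fun k => S k = a)).card

section Occ

variable {α : Type*} [DecidableEq α] (S : ℕ → α) (a : α)

theorem occ_add_occ {i m j : ℕ} (him : i ≤ m + 1) (hmj : m ≤ j) :
    occ S a i m + occ S a (m + 1) j = occ S a i j := by
  unfold occ
  rw [← Finset.card_union_of_disjoint, ← Finset.filter_union]
  · congr 2
    ext p
    simp only [Finset.mem_union, Finset.mem_Icc]
    omega
  · refine Finset.disjoint_filter_filter (Finset.disjoint_left.2 fun p hp hp' => ?_)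
    simp only [Finset.mem_Icc] at hp hp'
    omega

theorem occ_succ {i p : ℕ} (hip : i ≤ p + 1) :
    occ S a i (p + 1) = occ S a i p + if S (p + 1) = a then 1 else 0 := by
  rw [← occ_add_occ S a hip p.le_succ]
  simp only [occ, Finset.Icc_self, Finset.filter_singleton]
  split_ifs <;> rfl

theorem occ_mono {i p q : ℕ} (hpq : p ≤ q) : occ S a i p ≤ occ S a i q :=
  Finset.card_le_card (Finset.filter_subset_filter _ (Finset.Icc_subset_Icc_right hpq))

theorem occ_lt_occ {i p q : ℕ} (hiq : i ≤ q) (hpq : p < q) (hq : S q = a) :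
    occ S a i p < occ S a i q := by
  refine Finset.card_lt_card (Finset.ssubset_iff_of_subset ?_ |>.2 ⟨q, ?_, ?_⟩)
  · exact Finset.filter_subset_filter _ (Finset.Icc_subset_Icc_right hpq.le)
  · simp [hiq, hq]
  · simp [hpq.not_ge]

theorem occ_eq_one_of_leftmost {i k : ℕ} (hik : i ≤ k) (hk : S k = a)
    (hleft : ∀ p, i ≤ p → p < k → S p ≠ a) : occ S a i k = 1 := by
  rw [occ, Finset.card_eq_one]
  refine ⟨k, Finset.eq_singleton_iff_unique_mem.2 ⟨by simp [hik, hk], fun p hp => ?_⟩⟩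
  simp only [Finset.mem_filter, Finset.mem_Icc] at hp
  by_contra hpk
  exact hleft p hp.1.1 (by omega) hp.2

theorem occ_add_one_of_leftmost {b i k j : ℕ} (hbk : b ≤ k + 1) (hik : i ≤ k) (hkj : k ≤ j)
    (hk : S k = a) (hleft : ∀ p, i ≤ p → p < k → S p ≠ a) :
    occ S a b j + 1 = occ S a b k + occ S a i j := by
  rw [← occ_add_occ S a hbk hkj, ← occ_add_occ S a (i := i) (by omega) hkj,
    occ_eq_one_of_leftmost S a hik hk hleft]
  ring

theorem exists_occ_eq_of_lt_of_le {b j t : ℕ} (hbj : b ≤ j + 1) (hjt : occ S a b j < t) :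
    ∀ {n}, t ≤ occ S a b n → ∃ p, j < p ∧ p ≤ n ∧ S p = a ∧ occ S a b p = t
  | 0, htn => absurd (hjt.trans_le htn) (occ_mono S a (Nat.zero_le j)).not_gt
  | n + 1, htn => by
    by_cases htn' : t ≤ occ S a b n
    · obtain ⟨p, hjp, hpn, hp, hpt⟩ := exists_occ_eq_of_lt_of_le hbj hjt htn'
      exact ⟨p, hjp, hpn.trans n.le_succ, hp, hpt⟩
    have hjn : j < n + 1 := by
      by_contra! hnj
      exact (hjt.trans_le htn).not_ge (occ_mono S a hnj)
    rw [occ_succ S a (by omega)] at htn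
    split_ifs at htn with hn
    · exact ⟨n + 1, hjn, le_rfl, hn, by rw [occ_succ S a (by omega), if_pos hn]; omega⟩
    · omega

theorem occ_lt_iff_of_le {b j n : ℕ} (hbj : b ≤ j + 1) (hjn : j ≤ n) (T : ℤ) :
    (occ S a b j : ℤ) < T ↔
      (occ S a b n : ℤ) < T ∨ ∃ p, p ≤ n ∧ S p = a ∧ (occ S a b p : ℤ) = T ∧ j < p := by
  constructor
  · intro hjT
    rcases lt_or_ge (occ S a b n : ℤ) T with hnT | hTn
    · exact Or.inl hnT
    lift T to ℕ using (Int.natCast_nonneg _).trans hjT.le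
    obtain ⟨p, hjp, hpn, hp, hpT⟩ :=
      exists_occ_eq_of_lt_of_le S a (t := T) hbj (by omega) (n := n) (by omega)
    exact Or.inr ⟨p, hpn, hp, by rw [hpT], hjp⟩
  · rintro (hnT | ⟨p, -, hp, hpT, hjp⟩)
    · have := occ_mono S a (i := b) hjn
      omega
    · have := occ_lt_occ S a (i := b) (by omega) hjp hp
      omega

end Occ

theorem stmt_0_general {α : Type*} [DecidableEq α] (S : ℕ → α) (n : ℕ) (τ : ℝ)
    (i k j : ℕ)
    (hik : i ≤ k) (hkj : k ≤ j) (hjn : j ≤ n)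
    (a : α) (ha : S k = a)
    (hleft : ∀ p, i ≤ p → p < k → S p ≠ a) :
    (((occ S a i j : ℝ) ≥ τ * ((j : ℝ) - (i : ℝ) + 1)) ↔
      ((occ S a 1 j : ℤ) ≥
        (occ S a 1 k : ℤ) + ⌈τ * ((j : ℝ) - (i : ℝ) + 1)⌉ - 1))
    ∧
    (((occ S a i j : ℝ) < τ * ((j : ℝ) - (i : ℝ) + 1)) ↔
      ((occ S a 1 n : ℤ) <
          (occ S a 1 k : ℤ) + ⌈τ * ((j : ℝ) - (i : ℝ) + 1)⌉ - 1 ∨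
        ∃ p, p ≤ n ∧ S p = a ∧
          (occ S a 1 p : ℤ) =
            (occ S a 1 k : ℤ) + ⌈τ * ((j : ℝ) - (i : ℝ) + 1)⌉ - 1 ∧
          j < p)) := by
  set x : ℝ := τ * ((j : ℝ) - (i : ℝ) + 1)
  have hrank := occ_add_one_of_leftmost S a (b := 1) (by omega) hik hkj ha hleft
  have hceil : x ≤ occ S a i j ↔ ⌈x⌉ ≤ (occ S a i j : ℤ) := by
    rw [Int.ceil_le, Int.cast_natCast]
  have hmaj : (occ S a i j : ℝ) ≥ x ↔ (occ S a 1 j : ℤ) ≥ (occ S a 1 k : ℤ) + ⌈x⌉ - 1 := by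
    rw [ge_iff_le, hceil]
    omega
  refine ⟨hmaj, ?_⟩
  rw [← not_le, ← ge_iff_le, hmaj, ge_iff_le, not_le]
  exact occ_lt_iff_of_le S a (by omega) hjn _

/-- Lemma: checking whether a symbol is a τ-majority (equivalently, a τ-minority)
of `S[i..j]` from the position `k` of its leftmost occurrence in the range,
via a (partial) rank and a select query. -/
theorem stmt_0 {α : Type*} [DecidableEq α] (S : ℕ → α) (n : ℕ) (τ : ℝ)
    (hτ0 : 0 < τ) (hτ1 : τ ≤ 1) (i k j : ℕ)
    (hi : 1 ≤ i) (hik : i ≤ k) (hkj : k ≤ j) (hjn : j ≤ n)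
    (a : α) (ha : S k = a)
    (hleft : ∀ p, i ≤ p → p < k → S p ≠ a) :
    (((occ S a i j : ℝ) ≥ τ * ((j : ℝ) - (i : ℝ) + 1)) ↔
      ((occ S a 1 j : ℤ) ≥
        (occ S a 1 k : ℤ) + ⌈τ * ((j : ℝ) - (i : ℝ) + 1)⌉ - 1))
    ∧
    (((occ S a i j : ℝ) < τ * ((j : ℝ) - (i : ℝ) + 1)) ↔
      ((occ S a 1 n : ℤ) <
          (occ S a 1 k : ℤ) + ⌈τ * ((j : ℝ) - (i : ℝ) + 1)⌉ - 1 ∨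
        ∃ p, p ≤ n ∧ S p = a ∧
          (occ S a 1 p : ℤ) =
            (occ S a 1 k : ℤ) + ⌈τ * ((j : ℝ) - (i : ℝ) + 1)⌉ - 1 ∧
          j < p)) :=
  stmt_0_general S n τ i k j hik hkj hjn a ha hleft
end

section
/- Let S[1..n] be a string, 1 ≤ i ≤ j ≤ n, and 0 < τ ≤ 1. If A is a set of ⌊1/τ⌋ + 1 distinct symbols, each of which occurs in S[i..j], then at least one symbol of A is a τ-minority of S[i..j]. Consequently, if S[i..j] has any τ-minority, then every list of min(⌊1/τ⌋ + 1, d) distinct symbols occurring in S[i..j], where d is the number of distinct symbols in S[i..j], contains a τ-minority. -/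
/-- A symbol `a` is a τ-minority of `S[i..j]` if it occurs in `S[i..j]`
but is not a τ-majority. -/
def IsMinority {α : Type*} [DecidableEq α] (S : ℕ → α) (τ : ℝ) (i j : ℕ) (a : α) : Prop :=
  (∃ k, i ≤ k ∧ k ≤ j ∧ S k = a) ∧
    ¬ ((occ S a i j : ℝ) ≥ τ * ((j : ℝ) - (i : ℝ) + 1))

section Minority

variable {α : Type*} [DecidableEq α] (S : ℕ → α) {τ : ℝ} {i j : ℕ}

lemma mem_image_Icc_iff {a : α} :
    a ∈ (Finset.Icc i j).image S ↔ ∃ k, i ≤ k ∧ k ≤ j ∧ S k = a := by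
  simp only [Finset.mem_image, Finset.mem_Icc, and_assoc]

lemma sum_occ_le_card_Icc (i j : ℕ) (A : Finset α) :
    ∑ a ∈ A, occ S a i j ≤ (Finset.Icc i j).card := by
  simp only [occ]
  rw [← Finset.card_biUnion]
  · exact Finset.card_le_card (Finset.biUnion_subset.mpr fun _ _ => Finset.filter_subset _ _)
  · intro a _ b _ hab
    exact Finset.disjoint_filter.mpr fun _ _ ha hb => hab (ha ▸ hb)

lemma sum_occ_le_length (hij : i ≤ j) (A : Finset α) :
    ∑ a ∈ A, (occ S a i j : ℝ) ≤ (j : ℝ) - i + 1 := by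
  have h := sum_occ_le_card_Icc S i j A
  rw [Nat.card_Icc] at h
  have hcast : ((j + 1 - i : ℕ) : ℝ) = (j : ℝ) - i + 1 := by
    rw [Nat.cast_sub (by omega)]
    push_cast
    ring
  exact_mod_cast hcast ▸ (Nat.cast_le (α := ℝ)).mpr h

lemma card_le_floor_of_forall_majority (hτ : 0 < τ) (hij : i ≤ j) {A : Finset α}
    (hA : ∀ a ∈ A, (occ S a i j : ℝ) ≥ τ * ((j : ℝ) - (i : ℝ) + 1)) :
    A.card ≤ ⌊1 / τ⌋₊ := by
  have hlen : (0 : ℝ) < (j : ℝ) - i + 1 := by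
    have : (i : ℝ) ≤ j := by exact_mod_cast hij
    linarith
  have hweight : (A.card : ℝ) * τ * ((j : ℝ) - i + 1) ≤ 1 * ((j : ℝ) - i + 1) :=
    calc (A.card : ℝ) * τ * ((j : ℝ) - i + 1)
        = ∑ _a ∈ A, τ * ((j : ℝ) - i + 1) := by rw [Finset.sum_const, nsmul_eq_mul, mul_assoc]
      _ ≤ ∑ a ∈ A, (occ S a i j : ℝ) := Finset.sum_le_sum hA
      _ ≤ 1 * ((j : ℝ) - i + 1) := by rw [one_mul]; exact sum_occ_le_length S hij A
  refine Nat.le_floor ((le_div_iff₀ hτ).mpr ?_)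
  exact le_of_mul_le_mul_right hweight hlen

lemma exists_isMinority_of_floor_lt_card (hτ : 0 < τ) (hij : i ≤ j) {A : Finset α}
    (hcard : ⌊1 / τ⌋₊ < A.card) (hocc : ∀ a ∈ A, ∃ k, i ≤ k ∧ k ≤ j ∧ S k = a) :
    ∃ a ∈ A, IsMinority S τ i j a := by
  by_contra! hnone
  refine hcard.not_ge (card_le_floor_of_forall_majority S hτ hij fun a ha => ?_)
  by_contra hlt
  exact hnone a ha ⟨hocc a ha, hlt⟩

end Minority

theorem stmt_2_general {α : Type*} [DecidableEq α] (S : ℕ → α) (τ : ℝ)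
    (hτ0 : 0 < τ) (i j : ℕ)
    (hij : i ≤ j) :
    (∀ A : Finset α, A.card = ⌊1 / τ⌋₊ + 1 →
        (∀ a ∈ A, ∃ k, i ≤ k ∧ k ≤ j ∧ S k = a) →
        ∃ a ∈ A, IsMinority S τ i j a)
    ∧
    ((∃ a, IsMinority S τ i j a) →
      ∀ A : Finset α, A ⊆ (Finset.Icc i j).image S →
        A.card = min (⌊1 / τ⌋₊ + 1) ((Finset.Icc i j).image S).card →
        ∃ a ∈ A, IsMinority S τ i j a) := by
  refine ⟨fun A hcard => exists_isMinority_of_floor_lt_card S hτ0 hij (by omega), ?_⟩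
  rintro ⟨a₀, ha₀⟩ A hsub hcard
  rcases le_or_gt (⌊1 / τ⌋₊ + 1) ((Finset.Icc i j).image S).card with hle | hlt
  · exact exists_isMinority_of_floor_lt_card S hτ0 hij (by omega)
      fun a ha => (mem_image_Icc_iff S).mp (hsub ha)
  · have hA : A = (Finset.Icc i j).image S :=
      Finset.eq_of_subset_of_card_le hsub (by omega)
    exact ⟨a₀, hA ▸ (mem_image_Icc_iff S).mpr ha₀.1, ha₀⟩

/-- Any `⌊1/τ⌋ + 1` distinct symbols occurring in `S[i..j]` include a τ-minority;
consequently, if `S[i..j]` has a τ-minority at all, then every list of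
`min(⌊1/τ⌋ + 1, d)` distinct symbols occurring in `S[i..j]` contains one. -/
theorem stmt_2 {α : Type*} [DecidableEq α] (S : ℕ → α) (n : ℕ) (τ : ℝ)
    (hτ0 : 0 < τ) (hτ1 : τ ≤ 1) (i j : ℕ)
    (hi : 1 ≤ i) (hij : i ≤ j) (hjn : j ≤ n) :
    (∀ A : Finset α, A.card = ⌊1 / τ⌋₊ + 1 →
        (∀ a ∈ A, ∃ k, i ≤ k ∧ k ≤ j ∧ S k = a) →
        ∃ a ∈ A, IsMinority S τ i j a)
    ∧
    ((∃ a, IsMinority S τ i j a) →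
      ∀ A : Finset α, A ⊆ (Finset.Icc i j).image S →
        A.card = min (⌊1 / τ⌋₊ + 1) ((Finset.Icc i j).image S).card →
        ∃ a ∈ A, IsMinority S τ i j a) :=
  stmt_2_general S τ hτ0 i j hij
end

section
/- For integers ℓ ≥ 1 and k ≥ 0, call the integer interval [k·2^{ℓ−1} + 1, k·2^{ℓ−1} + 2^ℓ] an interval of level ℓ. Say that two intervals partially overlap if they intersect but neither is contained in the other. Then there do not exist three pairwise distinct intervals of this family (taken from any levels) such that all three pairs of them partially overlap each other. -/
/-- Interval number `k` of level `ℓ`: `[k·2^{ℓ-1} + 1, k·2^{ℓ-1} + 2^ℓ]`. -/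
def lvlInterval (ℓ k : ℕ) : Set ℕ :=
  Set.Icc (k * 2 ^ (ℓ - 1) + 1) (k * 2 ^ (ℓ - 1) + 2 ^ ℓ)

/-- Two intervals partially overlap if they intersect but neither contains the other. -/
def PartiallyOverlap (I J : Set ℕ) : Prop :=
  (I ∩ J).Nonempty ∧ ¬ I ⊆ J ∧ ¬ J ⊆ I

lemma key (m n k k' : ℕ) (hmn : m ≤ n)
    (H : PartiallyOverlap (lvlInterval (m+1) k) (lvlInterval (n+1) k')) :
    k * 2^m + 2^m = k' * 2^n ∨ k * 2^m + 2^m = k' * 2^n + 2 * 2^n := by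
  obtain ⟨⟨x, hx1, hx2⟩, hns1, _⟩ := H
  simp only [lvlInterval, Set.mem_Icc, Nat.add_sub_cancel] at hx1 hx2
  set h := 2^m with hh
  set t := 2^(n-m) with ht
  have hnt : 2^n = h * t := by rw [hh, ht, ← pow_add]; congr 1; omega
  have hpos : 1 ≤ h := Nat.one_le_two_pow
  have htpos : 1 ≤ t := Nat.one_le_two_pow
  set A := k' * t with hA
  have hrw : k' * 2^n = A * h := by rw [hnt, hA]; ring
  have hm1 : (2:ℕ)^(m+1) = 2 * h := by rw [hh]; ring
  have hn1 : (2:ℕ)^(n+1) = 2 * (h*t) := by rw [pow_succ, hnt]; ring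
  rw [hm1] at hx1
  rw [hn1, hrw] at hx2
  have cancel : ∀ a b : ℕ, a * h < b * h → a < b :=
    fun a b hab => lt_of_mul_lt_mul_right hab (Nat.zero_le h)
  have i1 : k < A + 2*t := by
    apply cancel; nlinarith [hx1.1, hx2.2]
  have i2 : A < k + 2 := by
    apply cancel; nlinarith [hx2.1, hx1.2]
  have i3 : k < A ∨ A + 2*t < k + 2 := by
    rw [lvlInterval, lvlInterval] at hns1
    simp only [Nat.add_sub_cancel] at hns1
    rw [← hh] at hns1
    rw [hm1, hn1, hrw, Set.Icc_subset_Icc_iff (by nlinarith)] at hns1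
    push_neg at hns1
    by_cases hc : A * h + 1 ≤ k * h + 1
    · right; apply cancel; nlinarith [hns1 hc]
    · left; apply cancel; omega
  have : k + 1 = A ∨ k + 1 = A + 2*t := by omega
  rcases this with h' | h'
  · left; rw [hrw, ← h']; ring
  · right; rw [hrw, hnt]; nlinarith

lemma po_symm {I J : Set ℕ} (h : PartiallyOverlap I J) : PartiallyOverlap J I :=
  ⟨Set.inter_comm I J ▸ h.1, h.2.2, h.2.1⟩

lemma arith (H1 H2 H3 P1 P2 P3 : ℕ) (h1 : 1 ≤ H1) (h2 : 1 ≤ H2) (h3 : 1 ≤ H3)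
    (e12 : (H1 ≤ H2 ∧ (P1+H1 = P2 ∨ P1+H1 = P2+2*H2)) ∨
           (H2 ≤ H1 ∧ (P2+H2 = P1 ∨ P2+H2 = P1+2*H1)))
    (e13 : (H1 ≤ H3 ∧ (P1+H1 = P3 ∨ P1+H1 = P3+2*H3)) ∨
           (H3 ≤ H1 ∧ (P3+H3 = P1 ∨ P3+H3 = P1+2*H1)))
    (e23 : (H2 ≤ H3 ∧ (P2+H2 = P3 ∨ P2+H2 = P3+2*H3)) ∨
           (H3 ≤ H2 ∧ (P3+H3 = P2 ∨ P3+H3 = P2+2*H2))) : False := by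
  omega

/-- There are no three distinct intervals of the family (from any levels) such
that the three pairs of them partially overlap each other. -/
theorem stmt_6 :
    ¬ ∃ (ℓ₁ k₁ ℓ₂ k₂ ℓ₃ k₃ : ℕ), 1 ≤ ℓ₁ ∧ 1 ≤ ℓ₂ ∧ 1 ≤ ℓ₃ ∧
      lvlInterval ℓ₁ k₁ ≠ lvlInterval ℓ₂ k₂ ∧
      lvlInterval ℓ₁ k₁ ≠ lvlInterval ℓ₃ k₃ ∧
      lvlInterval ℓ₂ k₂ ≠ lvlInterval ℓ₃ k₃ ∧
      PartiallyOverlap (lvlInterval ℓ₁ k₁) (lvlInterval ℓ₂ k₂) ∧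
      PartiallyOverlap (lvlInterval ℓ₁ k₁) (lvlInterval ℓ₃ k₃) ∧
      PartiallyOverlap (lvlInterval ℓ₂ k₂) (lvlInterval ℓ₃ k₃) := by
  rintro ⟨ℓ₁, k₁, ℓ₂, k₂, ℓ₃, k₃, h1, h2, h3, -, -, -, p12, p13, p23⟩
  obtain ⟨m₁, rfl⟩ : ∃ m, ℓ₁ = m + 1 := ⟨ℓ₁ - 1, by omega⟩
  obtain ⟨m₂, rfl⟩ : ∃ m, ℓ₂ = m + 1 := ⟨ℓ₂ - 1, by omega⟩
  obtain ⟨m₃, rfl⟩ : ∃ m, ℓ₃ = m + 1 := ⟨ℓ₃ - 1, by omega⟩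
  have mono : ∀ a b : ℕ, a ≤ b → (2:ℕ)^a ≤ 2^b :=
    fun a b hab => Nat.pow_le_pow_right (by norm_num) hab
  refine arith (2^m₁) (2^m₂) (2^m₃) (k₁*2^m₁) (k₂*2^m₂) (k₃*2^m₃)
    Nat.one_le_two_pow Nat.one_le_two_pow Nat.one_le_two_pow ?_ ?_ ?_
  · rcases Nat.le_total m₁ m₂ with h | h
    · exact Or.inl ⟨mono _ _ h, key m₁ m₂ k₁ k₂ h p12⟩
    · exact Or.inr ⟨mono _ _ h, key m₂ m₁ k₂ k₁ h (po_symm p12)⟩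
  · rcases Nat.le_total m₁ m₃ with h | h
    · exact Or.inl ⟨mono _ _ h, key m₁ m₃ k₁ k₃ h p13⟩
    · exact Or.inr ⟨mono _ _ h, key m₃ m₁ k₃ k₁ h (po_symm p13)⟩
  · rcases Nat.le_total m₂ m₃ with h | h
    · exact Or.inl ⟨mono _ _ h, key m₂ m₃ k₂ k₃ h p23⟩
    · exact Or.inr ⟨mono _ _ h, key m₃ m₂ k₃ k₂ h (po_symm p23)⟩
end

section
/- Let S[1..n] be a string, 0 < τ ≤ 1, 1 ≤ i ≤ j ≤ n, and b = ⌊log₂(j − i + 1)⌋. If a is a τ-majority of S[i..j] and k is the leftmost occurrence of a in S[i..j], then a occurs at least τ·2^b times in the range S[k..min(n, k + 2^{b+1} − 1)], i.e., occ(a, S[k..min(n, k + 2^{b+1} − 1)]) ≥ τ·2^b. -/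
section Occ

variable {α : Type*} [DecidableEq α] (S : ℕ → α) (a : α)

theorem occ_mono_right {i j j' : ℕ} (hj : j ≤ j') : occ S a i j ≤ occ S a i j' :=
  Finset.card_le_card <| Finset.filter_subset_filter _ <| Finset.Icc_subset_Icc_right hj

theorem occ_le_occ_of_forall_ne {i k j : ℕ} (hleft : ∀ p, i ≤ p → p < k → S p ≠ a) :
    occ S a i j ≤ occ S a k j := by
  refine Finset.card_le_card fun p hp => ?_
  simp only [Finset.mem_filter, Finset.mem_Icc] at hp ⊢
  refine ⟨⟨?_, hp.1.2⟩, hp.2⟩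
  by_contra! hpk
  exact hleft p hp.1.1 hpk hp.2

end Occ

theorem two_pow_log_le_sub_add_one {i j : ℕ} (hij : i ≤ j) :
    (2 : ℝ) ^ Nat.log 2 (j - i + 1) ≤ (j : ℝ) - i + 1 := by
  have h : 2 ^ Nat.log 2 (j - i + 1) ≤ j - i + 1 := Nat.pow_log_le_self 2 (by omega)
  have h' : ((2 ^ Nat.log 2 (j - i + 1) : ℕ) : ℝ) ≤ ((j - i + 1 : ℕ) : ℝ) := by exact_mod_cast h
  rwa [Nat.cast_add_one, Nat.cast_sub hij, Nat.cast_pow, Nat.cast_ofNat] at h'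

theorem le_add_two_pow_log_succ_sub_one {i j k : ℕ} (hik : i ≤ k) :
    j ≤ k + 2 ^ (Nat.log 2 (j - i + 1) + 1) - 1 := by
  have := Nat.lt_pow_succ_log_self one_lt_two (j - i + 1)
  omega

theorem stmt_9_general {α : Type*} [DecidableEq α] (S : ℕ → α) (n : ℕ) (τ : ℝ)
    (hτ0 : 0 < τ) (i j : ℕ)
    (hij : i ≤ j) (hjn : j ≤ n)
    (a : α) (k : ℕ) (hik : i ≤ k)
    (hleft : ∀ p, i ≤ p → p < k → S p ≠ a)
    (hmaj : (occ S a i j : ℝ) ≥ τ * ((j : ℝ) - (i : ℝ) + 1)) :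
    (occ S a k (min n (k + 2 ^ (Nat.log 2 (j - i + 1) + 1) - 1)) : ℝ)
      ≥ τ * 2 ^ (Nat.log 2 (j - i + 1)) := by
  have hjm : j ≤ min n (k + 2 ^ (Nat.log 2 (j - i + 1) + 1) - 1) :=
    le_min hjn (le_add_two_pow_log_succ_sub_one hik)
  calc τ * 2 ^ Nat.log 2 (j - i + 1) ≤ τ * ((j : ℝ) - i + 1) :=
        mul_le_mul_of_nonneg_left (two_pow_log_le_sub_add_one hij) hτ0.le
    _ ≤ occ S a i j := hmaj
    _ ≤ occ S a k j := by exact_mod_cast occ_le_occ_of_forall_ne S a hleft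
    _ ≤ _ := by exact_mod_cast occ_mono_right S a hjm

/-- If `a` is a τ-majority of `S[i..j]` and `k` is the leftmost occurrence of
`a` in `S[i..j]`, then with `b = ⌊log₂(j - i + 1)⌋`, the symbol `a` occurs at
least `τ·2^b` times in `S[k..min(n, k + 2^{b+1} - 1)]`. -/
theorem stmt_9 {α : Type*} [DecidableEq α] (S : ℕ → α) (n : ℕ) (τ : ℝ)
    (hτ0 : 0 < τ) (hτ1 : τ ≤ 1) (i j : ℕ)
    (hi : 1 ≤ i) (hij : i ≤ j) (hjn : j ≤ n)
    (a : α) (k : ℕ) (hik : i ≤ k) (hkj : k ≤ j) (ha : S k = a)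
    (hleft : ∀ p, i ≤ p → p < k → S p ≠ a)
    (hmaj : (occ S a i j : ℝ) ≥ τ * ((j : ℝ) - (i : ℝ) + 1)) :
    (occ S a k (min n (k + 2 ^ (Nat.log 2 (j - i + 1) + 1) - 1)) : ℝ)
      ≥ τ * 2 ^ (Nat.log 2 (j - i + 1)) :=
  stmt_9_general S n τ hτ0 i j hij hjn a k hik hleft hmaj
end

section
/- Let S[1..n] be a string, 0 < τ ≤ 1, 1 ≤ i ≤ j ≤ n, and b = ⌊log₂(j − i + 1)⌋. If a is a τ-majority of S[i..j], then for every position k with i ≤ k ≤ j, a occurs at least τ·2^b times in the range S[max(1, k − 2^{b+1})..min(n, k + 2^{b+1})]. -/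
theorem occ_mono_s11 {α : Type*} [DecidableEq α] (S : ℕ → α) (a : α) {i i' j j' : ℕ}
    (hi : i' ≤ i) (hj : j ≤ j') : occ S a i j ≤ occ S a i' j' :=
  Finset.card_le_card <| Finset.filter_subset_filter _ <| Finset.Icc_subset_Icc hi hj

theorem stmt_11_general {α : Type*} [DecidableEq α] (S : ℕ → α) (n : ℕ) (τ : ℝ)
    (hτ0 : 0 < τ) (i j : ℕ)
    (hi : 1 ≤ i) (hij : i ≤ j) (hjn : j ≤ n) (a : α)
    (hmaj : (occ S a i j : ℝ) ≥ τ * ((j : ℝ) - (i : ℝ) + 1)) :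
    ∀ k, i ≤ k → k ≤ j →
      (occ S a (max 1 (k - 2 ^ (Nat.log 2 (j - i + 1) + 1)))
          (min n (k + 2 ^ (Nat.log 2 (j - i + 1) + 1))) : ℝ)
        ≥ τ * 2 ^ (Nat.log 2 (j - i + 1)) := by
  intro k hik hkj
  set b := Nat.log 2 (j - i + 1)
  have hpow_le : 2 ^ b ≤ j - i + 1 := Nat.pow_log_le_self 2 (by omega)
  have hlt_pow : j - i + 1 < 2 ^ (b + 1) := Nat.lt_pow_succ_log_self (by norm_num) _
  have hpow_le_real : (2 : ℝ) ^ b ≤ (j : ℝ) - i + 1 := by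
    have : 2 ^ b + i ≤ j + 1 := by omega
    have : (2 : ℝ) ^ b + i ≤ j + 1 := by exact_mod_cast this
    linarith
  have hwindow : occ S a i j ≤
      occ S a (max 1 (k - 2 ^ (b + 1))) (min n (k + 2 ^ (b + 1))) :=
    occ_mono_s11 S a (by omega) (by omega)
  calc τ * 2 ^ b ≤ τ * ((j : ℝ) - i + 1) := by gcongr
    _ ≤ occ S a i j := hmaj
    _ ≤ _ := by exact_mod_cast hwindow

/-- If `a` is a τ-majority of `S[i..j]`, then with `b = ⌊log₂(j - i + 1)⌋`, for
every `k ∈ [i, j]` the symbol `a` occurs at least `τ·2^b` times in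
`S[max(1, k - 2^{b+1})..min(n, k + 2^{b+1})]`. -/
theorem stmt_11 {α : Type*} [DecidableEq α] (S : ℕ → α) (n : ℕ) (τ : ℝ)
    (hτ0 : 0 < τ) (hτ1 : τ ≤ 1) (i j : ℕ)
    (hi : 1 ≤ i) (hij : i ≤ j) (hjn : j ≤ n) (a : α)
    (hocc : ∃ k, i ≤ k ∧ k ≤ j ∧ S k = a)
    (hmaj : (occ S a i j : ℝ) ≥ τ * ((j : ℝ) - (i : ℝ) + 1)) :
    ∀ k, i ≤ k → k ≤ j →
      (occ S a (max 1 (k - 2 ^ (Nat.log 2 (j - i + 1) + 1)))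
          (min n (k + 2 ^ (Nat.log 2 (j - i + 1) + 1))) : ℝ)
        ≥ τ * 2 ^ (Nat.log 2 (j - i + 1)) :=
  stmt_11_general S n τ hτ0 i j hi hij hjn a hmaj
end

section
/- Let S[1..n] be a string, 1 ≤ i ≤ j ≤ n, and let x be a mode of S[i..j], i.e., occ(x, S[i..j]) ≥ occ(a, S[i..j]) for every symbol a, and x occurs in S[i..j]. Let τ = 2^{−⌈log₂((j − i + 1)/occ(x, S[i..j]))⌉}. Then (1) x is a τ-majority of S[i..j], and (2) every τ-majority a of S[i..j] satisfies occ(a, S[i..j]) > occ(x, S[i..j])/2; hence the doubling procedure that queries thresholds 1, 1/2, 1/4, ... first finds a nonempty answer at a threshold at which x is reported among at most 2·(j − i + 1)/occ(x, S[i..j]) candidates. -/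
/-- Let `x` be a mode of `S[i..j]` and let
`τ = 2^{-⌈log₂((j - i + 1)/occ(x, S[i..j]))⌉}`.  Then (1) `x` is a τ-majority of
`S[i..j]`; (2) every τ-majority `a` of `S[i..j]` satisfies
`occ(a, S[i..j]) > occ(x, S[i..j])/2`; and (3) there are at most
`2·(j - i + 1)/occ(x, S[i..j])` τ-majorities of `S[i..j]`. -/
theorem stmt_15 {α : Type*} [DecidableEq α] (S : ℕ → α) (n : ℕ)
    (i j : ℕ) (hi : 1 ≤ i) (hij : i ≤ j) (hjn : j ≤ n)
    (x : α) (hxocc : ∃ k, i ≤ k ∧ k ≤ j ∧ S k = x)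
    (hmode : ∀ a : α, occ S a i j ≤ occ S x i j) :
    let τ : ℝ :=
      (2 : ℝ) ^ (-⌈Real.logb 2 (((j : ℝ) - (i : ℝ) + 1) / (occ S x i j : ℝ))⌉)
    ((occ S x i j : ℝ) ≥ τ * ((j : ℝ) - (i : ℝ) + 1))
    ∧
    (∀ a : α, (∃ k, i ≤ k ∧ k ≤ j ∧ S k = a) →
      (occ S a i j : ℝ) ≥ τ * ((j : ℝ) - (i : ℝ) + 1) →
      (occ S a i j : ℝ) > (occ S x i j : ℝ) / 2)
    ∧
    (((((Finset.Icc i j).image S).filter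
        (fun a => (occ S a i j : ℝ) ≥ τ * ((j : ℝ) - (i : ℝ) + 1))).card : ℝ)
      ≤ 2 * ((j : ℝ) - (i : ℝ) + 1) / (occ S x i j : ℝ)) := by
  intro τ
  have hτ0 : τ = (2 : ℝ) ^ (-⌈Real.logb 2 (((j : ℝ) - (i : ℝ) + 1) / (occ S x i j : ℝ))⌉) := rfl
  clear_value τ
  set m : ℕ := occ S x i j with hmdef
  set N : ℝ := (j : ℝ) - (i : ℝ) + 1 with hNdef
  have hm1 : 1 ≤ m := by
    obtain ⟨k, hk1, hk2, hk3⟩ := hxocc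
    have hk : k ∈ (Finset.Icc i j).filter (fun k => S k = x) := by
      simp [Finset.mem_Icc, hk1, hk2, hk3]
    exact Finset.card_pos.mpr ⟨k, hk⟩
  have hm0 : (0:ℝ) < m := by exact_mod_cast hm1
  have hmN : (m:ℝ) ≤ N := by
    have : m ≤ (Finset.Icc i j).card := Finset.card_filter_le _ _
    rw [Nat.card_Icc] at this
    have : (m:ℝ) ≤ ((j + 1 - i : ℕ) : ℝ) := by exact_mod_cast this
    rw [Nat.cast_sub (by omega)] at this
    push_cast at this
    linarith
  have hN0 : (0:ℝ) < N := lt_of_lt_of_le hm0 hmN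
  set c : ℤ := ⌈Real.logb 2 (N / m)⌉ with hcdef
  have hr0 : (0:ℝ) < N / m := div_pos hN0 hm0
  have hrlog : (2:ℝ) ^ (Real.logb 2 (N / m)) = N / m :=
    Real.rpow_logb (by norm_num) (by norm_num) hr0
  -- part 1 key: N/m ≤ 2^c
  have h1 : N / m ≤ (2:ℝ) ^ (c : ℝ) := by
    rw [← hrlog]
    exact Real.rpow_le_rpow_left_iff (by norm_num) |>.mpr (Int.le_ceil _)
  -- part 2 key: 2^(c-1) < N/m
  have h2 : (2:ℝ) ^ ((c:ℝ) - 1) < N / m := by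
    rw [← hrlog]
    refine Real.rpow_lt_rpow_left_iff (by norm_num) |>.mpr ?_
    have := Int.ceil_lt_add_one (Real.logb 2 (N / m))
    push_cast at this ⊢
    linarith
  have hτ : τ = (2:ℝ) ^ (-(c:ℝ)) := by
    rw [hτ0, ← Real.rpow_intCast]
    norm_num
  have hprod : (2:ℝ) ^ (-(c:ℝ)) * (2:ℝ) ^ (c:ℝ) = 1 := by
    rw [← Real.rpow_add (by norm_num)]; simp
  have hprod2 : (2:ℝ) ^ ((c:ℝ) - 1) * (2:ℝ) ^ (-(c:ℝ)) = 1/2 := by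
    rw [← Real.rpow_add (by norm_num)]
    have h : (c:ℝ) - 1 + -(c:ℝ) = -1 := by ring
    rw [h, Real.rpow_neg_one]
    norm_num
  have hP : (0:ℝ) < (2:ℝ) ^ (-(c:ℝ)) := Real.rpow_pos_of_pos (by norm_num) _
  have hP2 : (0:ℝ) < (2:ℝ) ^ ((c:ℝ)) := Real.rpow_pos_of_pos (by norm_num) _
  -- Part 1
  have part1 : (m : ℝ) ≥ τ * N := by
    rw [hτ]
    have hNle : N ≤ (2:ℝ) ^ (c:ℝ) * m := (div_le_iff₀ hm0).mp h1
    nlinarith [mul_le_mul_of_nonneg_left hNle hP.le]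
  -- Part 2 key inequality: m/2 < τ*N
  have key2 : (m:ℝ) / 2 < τ * N := by
    rw [hτ]
    have hlt : (2:ℝ) ^ ((c:ℝ)-1) * m < N := (lt_div_iff₀ hm0).mp h2
    nlinarith [mul_lt_mul_of_pos_left hlt hP]
  have part2 : ∀ a : α, (∃ k, i ≤ k ∧ k ≤ j ∧ S k = a) →
      (occ S a i j : ℝ) ≥ τ * N → (occ S a i j : ℝ) > (m : ℝ) / 2 := by
    intro a _ ha
    exact lt_of_lt_of_le key2 ha
  refine ⟨part1, part2, ?_⟩
  -- Part 3
  set F := ((Finset.Icc i j).image S).filter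
      (fun a => (occ S a i j : ℝ) ≥ τ * N) with hFdef
  have hsum : ∑ a ∈ (Finset.Icc i j).image S, occ S a i j = (Finset.Icc i j).card := by
    rw [Finset.card_eq_sum_card_image S (Finset.Icc i j)]
    rfl
  have hsumN : ((∑ a ∈ (Finset.Icc i j).image S, occ S a i j : ℕ) : ℝ) ≤ N := by
    rw [hsum, Nat.card_Icc]
    rw [Nat.cast_sub (by omega)]
    push_cast
    simp [hNdef]
    linarith
  have hsubF : ∑ a ∈ F, (occ S a i j : ℝ) ≤ N := by
    calc ∑ a ∈ F, (occ S a i j : ℝ)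
        ≤ ∑ a ∈ (Finset.Icc i j).image S, (occ S a i j : ℝ) := by
          apply Finset.sum_le_sum_of_subset_of_nonneg (Finset.filter_subset _ _)
          intro a _ _; positivity
      _ ≤ N := by push_cast at hsumN ⊢; exact hsumN
  have hlow : (F.card : ℝ) * ((m:ℝ)/2) ≤ ∑ a ∈ F, (occ S a i j : ℝ) := by
    have : ∀ a ∈ F, (m:ℝ)/2 ≤ (occ S a i j : ℝ) := by
      intro a haF
      rw [hFdef, Finset.mem_filter] at haF
      exact le_trans key2.le haF.2
    calc (F.card : ℝ) * ((m:ℝ)/2) = ∑ _a ∈ F, ((m:ℝ)/2) := by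
          rw [Finset.sum_const, nsmul_eq_mul]
      _ ≤ _ := Finset.sum_le_sum this
  have hfin : (F.card : ℝ) * ((m:ℝ)/2) ≤ N := le_trans hlow hsubF
  rw [le_div_iff₀ hm0]
  nlinarith [hfin]
end
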